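/- For F(x,y) = (1/2)(y/x + x/y) on Ω = {(x,y) ∈ (0,1]² : x+y > 1} with the probability measure dm = 2 dx dy, the tail function G_F(t) = m({(x,y) ∈ Ω : F(x,y) ≥ t}) satisfies G_F(t) ~ 1/(2t²) as t → ∞, i.e., lim_{t→∞} 2t² · G_F(t) = 1. -/

import Mathlib

/-!
With `u = y / x` we have `F = (u + u⁻¹) / 2`, so for `t > 1` the tail `{F ≥ t}` is
`{u ≥ r} ∪ {u ≤ r⁻¹}`, where `r > 1` solves `r + r⁻¹ = 2t`. Inside `Ω` these are two triangles
exchanged by `(x, y) ↦ (y, x)`, each of area `1 / (2r(r + 1))`. Hence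
`2t² G_F(t) = (r + r⁻¹)² / (r(r + 1))`, which tends to `1` because `r → ∞` with `t`.
-/

open MeasureTheory

/-- The Farey triangle `Ω = {(x,y) ∈ (0,1]² : x + y > 1}`. -/
def fareyTriangle : Set (ℝ × ℝ) :=
  {z | 0 < z.1 ∧ z.1 ≤ 1 ∧ 0 < z.2 ∧ z.2 ≤ 1 ∧ 1 < z.1 + z.2}

open Set Filter Topology

theorem volume_regionBetween_Ioc_eq_lintegral {α : Type*} [MeasurableSpace α] {μ : Measure α}
    {f g : α → ℝ} {s : Set α} (hf : Measurable f) (hg : Measurable g) (hs : MeasurableSet s) :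
    μ.prod volume {p : α × ℝ | p.1 ∈ s ∧ p.2 ∈ Ioc (f p.1) (g p.1)} =
      ∫⁻ x in s, ENNReal.ofReal (g x - f x) ∂μ := by
  rw [Measure.prod_apply (measurableSet_region_between_oc hf hg hs), ← lintegral_indicator hs]
  congr with x
  by_cases hx : x ∈ s
  · rw [indicator_of_mem hx, ← Real.volume_Ioc]
    congr with y
    simp [hx]
  · simp [hx, Set.preimage]

theorem add_inv_le_add_inv_iff {r u : ℝ} (hr : 1 ≤ r) (hu : 0 < u) :
    r + r⁻¹ ≤ u + u⁻¹ ↔ r ≤ u ∨ u ≤ r⁻¹ := by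
  have hr0 : 0 < r := by linarith
  have hdiff : u + u⁻¹ - (r + r⁻¹) = (u - r) * (u * r - 1) / (u * r) := by
    field_simp
    ring
  have hinv : u ≤ r⁻¹ ↔ u * r ≤ 1 := by rw [← one_div, le_div_iff₀ hr0]
  rw [← sub_nonneg, hdiff, le_div_iff₀ (by positivity), zero_mul, hinv]
  constructor
  · intro h
    by_contra! hc
    nlinarith [mul_pos (sub_pos.2 hc.1) (sub_pos.2 hc.2)]
  · rintro (h | h)
    · exact mul_nonneg (sub_nonneg.2 h) (by nlinarith)
    · exact mul_nonneg_of_nonpos_of_nonpos (by nlinarith) (sub_nonpos.2 h)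

/-- The inverse of the Joukowski map `r ↦ (r + r⁻¹) / 2` on `[1, ∞)`. -/
noncomputable def joukowskiInv (t : ℝ) : ℝ := t + √(t ^ 2 - 1)

theorem le_joukowskiInv (t : ℝ) : t ≤ joukowskiInv t :=
  le_add_of_nonneg_right (Real.sqrt_nonneg _)

theorem joukowskiInv_add_inv {t : ℝ} (ht : 1 ≤ t) :
    joukowskiInv t + (joukowskiInv t)⁻¹ = 2 * t := by
  have hs : √(t ^ 2 - 1) ^ 2 = t ^ 2 - 1 := Real.sq_sqrt (by nlinarith)
  have hr : 0 < joukowskiInv t := by linarith [le_joukowskiInv t]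
  -- `(t + s)(t - s) = t² - s² = 1`
  have hinv : (joukowskiInv t)⁻¹ = t - √(t ^ 2 - 1) := by
    refine inv_eq_of_mul_eq_one_right ?_
    rw [joukowskiInv]
    nlinarith
  rw [hinv, joukowskiInv]
  ring

theorem tendsto_joukowskiInv_atTop : Tendsto joukowskiInv atTop atTop :=
  tendsto_atTop_mono le_joukowskiInv tendsto_id

theorem tendsto_sq_add_inv_div_mul_add_one :
    Tendsto (fun r : ℝ => (r + r⁻¹) ^ 2 / (r * (r + 1))) atTop (𝓝 1) := by
  have h := (((tendsto_inv_atTop_zero (𝕜 := ℝ)).pow 2).const_add 1).pow 2 |>.div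
    ((tendsto_inv_atTop_zero (𝕜 := ℝ)).const_add 1) (by norm_num)
  simp only [ne_eq, OfNat.ofNat_ne_zero, not_false_eq_true, zero_pow, add_zero, one_pow,
    div_one] at h
  refine h.congr' ?_
  filter_upwards [eventually_gt_atTop 0] with r hr
  simp only [Pi.div_apply]
  field_simp

theorem le_half_div_add_div_iff {t x y : ℝ} (ht : 1 ≤ t) (hx : 0 < x) (hy : 0 < y) :
    t ≤ 1 / 2 * (y / x + x / y) ↔ joukowskiInv t * y ≤ x ∨ joukowskiInv t * x ≤ y := by
  have hr : 1 ≤ joukowskiInv t := ht.trans (le_joukowskiInv t)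
  have hr0 : 0 < joukowskiInv t := by linarith
  have hF : 1 / 2 * (y / x + x / y) = (y / x + (y / x)⁻¹) / 2 := by
    rw [inv_div]
    ring
  rw [hF, le_div_iff₀ two_pos, mul_comm, ← joukowskiInv_add_inv ht,
    add_inv_le_add_inv_iff hr (div_pos hy hx), le_div_iff₀ hx, div_le_iff₀ hx,
    le_inv_mul_iff₀ hr0, or_comm]

def fareyCorner (r : ℝ) : Set (ℝ × ℝ) := {z ∈ fareyTriangle | r * z.2 ≤ z.1}

theorem fareyCorner_eq {r : ℝ} (hr : 1 ≤ r) :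
    fareyCorner r = {p | p.1 ∈ Ioc (r / (r + 1)) 1 ∧ p.2 ∈ Ioc (1 - p.1) (p.1 / r)} := by
  have hr0 : 0 < r := by linarith
  ext ⟨x, y⟩
  simp only [fareyCorner, fareyTriangle, mem_ofPred_eq, mem_Ioc,
    div_lt_iff₀ (by linarith : 0 < r + 1), le_div_iff₀ hr0]
  constructor
  · rintro ⟨⟨-, hx1, -, -, hxy⟩, hyx⟩
    exact ⟨⟨by nlinarith, hx1⟩, by linarith, by linarith⟩
  · rintro ⟨⟨hx, hx1⟩, hxy, hyx⟩
    exact ⟨⟨by nlinarith, hx1, by linarith, by nlinarith, by linarith⟩, by linarith⟩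

theorem measurableSet_fareyCorner {r : ℝ} (hr : 1 ≤ r) : MeasurableSet (fareyCorner r) := by
  rw [fareyCorner_eq hr]
  exact measurableSet_region_between_oc (f := fun x => 1 - x) (g := fun x => x / r)
    (by fun_prop) (by fun_prop) measurableSet_Ioc

theorem volume_fareyCorner {r : ℝ} (hr : 1 ≤ r) :
    volume (fareyCorner r) = ENNReal.ofReal (1 / (2 * r * (r + 1))) := by
  have hr0 : 0 < r := by linarith
  have ha : r / (r + 1) ≤ 1 := (div_le_one (by linarith)).2 (by linarith)
  have hnonneg : ∀ x ∈ Ioc (r / (r + 1)) 1, 0 ≤ x / r - (1 - x) := fun x ⟨hx, _⟩ => by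
    rw [div_lt_iff₀ (by linarith)] at hx
    rw [sub_nonneg, le_div_iff₀ hr0]
    nlinarith
  rw [fareyCorner_eq hr, Measure.volume_eq_prod,
    volume_regionBetween_Ioc_eq_lintegral (f := fun x => 1 - x) (g := fun x => x / r)
      (by fun_prop) (by fun_prop) measurableSet_Ioc,
    ← ofReal_integral_eq_lintegral_ofReal (Continuous.integrableOn_Ioc (by fun_prop))
      ((ae_restrict_iff' measurableSet_Ioc).2 (ae_of_all _ hnonneg)),
    ← intervalIntegral.integral_of_le ha,
    intervalIntegral.integral_sub (f := fun x => x / r) (g := fun x => 1 - x)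
      ((continuous_id.div_const r).intervalIntegrable _ _)
      ((continuous_const.sub continuous_id).intervalIntegrable _ _)]
  congr 1
  simp only [intervalIntegral.integral_div, integral_id,
    intervalIntegral.integral_comp_sub_left (fun x => x), sub_self]
  field_simp
  ring

theorem preimage_swap_fareyCorner (r : ℝ) :
    Prod.swap ⁻¹' fareyCorner r = {z ∈ fareyTriangle | r * z.1 ≤ z.2} := by
  ext ⟨x, y⟩
  simp only [fareyCorner, fareyTriangle, mem_preimage, Prod.swap_prod_mk, mem_ofPred_eq]
  constructor <;> rintro ⟨⟨hy, hy1, hx, hx1, hxy⟩, h⟩ <;>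
    exact ⟨⟨hx, hx1, hy, hy1, by linarith⟩, h⟩

theorem disjoint_fareyCorner_preimage_swap {r : ℝ} (hr : 1 < r) :
    Disjoint (fareyCorner r) (Prod.swap ⁻¹' fareyCorner r) := by
  rw [preimage_swap_fareyCorner, disjoint_left]
  rintro ⟨x, y⟩ ⟨⟨hx, -, hy, -⟩, hyx⟩ ⟨-, hxy⟩
  nlinarith

theorem tail_eq_fareyCorner_union {t : ℝ} (ht : 1 ≤ t) :
    {z ∈ fareyTriangle | (1 / 2) * (z.2 / z.1 + z.1 / z.2) ≥ t} =
      fareyCorner (joukowskiInv t) ∪ Prod.swap ⁻¹' fareyCorner (joukowskiInv t) := by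
  rw [preimage_swap_fareyCorner, fareyCorner, ← sep_or]
  exact sep_ext_iff.2 fun z hz => le_half_div_add_div_iff ht hz.1 hz.2.2.1

theorem volume_tail {t : ℝ} (ht : 1 < t) :
    volume {z ∈ fareyTriangle | (1 / 2) * (z.2 / z.1 + z.1 / z.2) ≥ t} =
      ENNReal.ofReal (1 / (joukowskiInv t * (joukowskiInv t + 1))) := by
  set r := joukowskiInv t
  have hr : 1 < r := ht.trans_le (le_joukowskiInv t)
  have hA := measurableSet_fareyCorner hr.le
  have hswap : volume (Prod.swap ⁻¹' fareyCorner r) = volume (fareyCorner r) :=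
    (Measure.measurePreserving_swap (μ := volume) (ν := volume)).measure_preimage
      hA.nullMeasurableSet
  rw [tail_eq_fareyCorner_union ht.le, measure_union (disjoint_fareyCorner_preimage_swap hr)
    (hA.preimage measurable_swap), hswap, volume_fareyCorner hr.le,
    ← ENNReal.ofReal_add (by positivity) (by positivity)]
  congr 1
  field_simp
  ring

/-- For `F(x,y) = (1/2)(y/x + x/y)` on `Ω` with `dm = 2 dx dy`, the tail
`G_F(t) = m({F ≥ t})` satisfies `G_F(t) ~ 1/(2t²)`, i.e. `2t²·G_F(t) → 1`. -/
theorem hyperbolic_statistic_tail_asymptotic :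
    Filter.Tendsto
      (fun t : ℝ => 2 * t ^ 2 *
        (2 * (volume {z ∈ fareyTriangle |
          (1 / 2) * (z.2 / z.1 + z.1 / z.2) ≥ t}).toReal))
      Filter.atTop (nhds 1) := by
  refine (tendsto_sq_add_inv_div_mul_add_one.comp tendsto_joukowskiInv_atTop).congr' ?_
  filter_upwards [eventually_gt_atTop 1] with t ht
  have hr : 0 < joukowskiInv t := by linarith [le_joukowskiInv t]
  rw [Function.comp_apply, joukowskiInv_add_inv ht.le, volume_tail ht,
    ENNReal.toReal_ofReal (by positivity)]
  field_simp
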